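/- Multinomial summation lemma over triangular arrays: Let ℓ ≥ 1, k ≥ 0, and let c̄¹,…,c̄^ℓ be nonnegative integers with c̄¹ = k. Let B(c̄) be the (finite) set of triangular arrays (b^i_j) of nonnegative integers, indexed by pairs (i,j) with i,j ≥ 1 and i+j ≤ ℓ+1, satisfying the row constraints Σ_{j=1}^{ℓ+1−i} b^i_j = c̄^i for 1 ≤ i ≤ ℓ and the column constraints Σ_{h=1}^{i−1} b^h_{ℓ+2−i} = c̄^i for 2 ≤ i ≤ ℓ. Then Σ_{(b^i_j) ∈ B(c̄)} ∏_{i=1}^{ℓ} ( c̄^i! / ∏_{j=1}^{ℓ+1−i} (b^i_j)! ) = ∏_{i=1}^{ℓ} C(k, c̄^i), where C(k,c) denotes the binomial coefficient 'k choose c' (equal to 0 when c > k). -/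
import Mathlib


namespace Cayley18

open Finset Function

lemma finite1 (N M : ℕ) :
    {a : ℕ → ℕ | ∀ j, a j ≤ M ∧ (N ≤ j → a j = 0)}.Finite := by
  apply (Set.finite_range (fun (f : Fin N → Fin (M+1)) (j : ℕ) =>
      if h : j < N then (f ⟨j, h⟩ : ℕ) else 0)).subset
  intro a ha
  refine ⟨fun j => ⟨a j, Nat.lt_succ_of_le (ha j).1⟩, ?_⟩
  funext j
  by_cases h : j < N
  · simp [h]
  · simp only [h, dif_neg, not_false_iff]
    exact ((ha j).2 (le_of_not_gt h)).symm

lemma finite2 (N M : ℕ) :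
    {b : ℕ → ℕ → ℕ | ∀ i j, b i j ≤ M ∧ (N ≤ i → b i j = 0) ∧ (N ≤ j → b i j = 0)}.Finite := by
  apply (Set.finite_range (fun (f : Fin N → Fin N → Fin (M+1)) (i j : ℕ) =>
      if hi : i < N then if hj : j < N then (f ⟨i, hi⟩ ⟨j, hj⟩ : ℕ) else 0 else 0)).subset
  intro b hb
  refine ⟨fun i j => ⟨b i j, Nat.lt_succ_of_le (hb i j).1⟩, ?_⟩
  funext i j
  by_cases hi : i < N
  · by_cases hj : j < N
    · simp [hi, hj]
    · simp only [hi, hj, dif_pos, dif_neg, not_false_iff]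
      exact ((hb i j).2.2 (le_of_not_gt hj)).symm
  · simp only [hi, dif_neg, not_false_iff]
    exact ((hb i j).2.1 (le_of_not_gt hi)).symm

/-- The set of nonneg integer vectors supported on `[0,N)` with sum `m`. -/
def V (N m : ℕ) : Set (ℕ → ℕ) :=
  {a | (∀ j, N ≤ j → a j = 0) ∧ ∑ j ∈ Finset.range N, a j = m}

lemma V_finite (N m : ℕ) : (V N m).Finite := by
  apply (finite1 N m).subset
  rintro a ⟨hz, hs⟩ j
  refine ⟨?_, hz j⟩
  by_cases h : j < N
  · exact hs ▸ Finset.single_le_sum (f := a) (fun _ _ => Nat.zero_le _) (Finset.mem_range.2 h)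
  · simp [hz j (le_of_not_gt h)]

lemma vandermonde (n : ℕ → ℕ) : ∀ N m : ℕ,
    (∑ᶠ a ∈ V N m, ∏ j ∈ Finset.range N, (((n j).choose (a j) : ℚ)))
      = (((∑ j ∈ Finset.range N, n j).choose m : ℚ)) := by
  intro N
  induction N with
  | zero =>
    intro m
    rcases Nat.eq_zero_or_pos m with rfl | hm
    · have : V 0 0 = {fun _ => 0} := by
        ext a
        simp only [V, Set.mem_setOf_eq, Set.mem_singleton_iff]
        constructor
        · rintro ⟨hz, -⟩; funext j; exact hz j (Nat.zero_le j)
        · rintro rfl; simp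
      rw [this, finsum_mem_singleton]
      simp
    · have : V 0 m = ∅ := by
        ext a
        simp only [V, Set.mem_setOf_eq, Set.mem_empty_iff_false, iff_false, not_and]
        intro _
        simp; omega
      rw [this, finsum_mem_empty]
      rw [Nat.choose_eq_zero_of_lt (by simpa using hm)]
      simp
  | succ N ih =>
    intro m
    -- decompose by the value t = a N
    have hdecomp : V (N+1) m =
        ⋃ t ∈ (Finset.range (m+1) : Set ℕ), (fun a => Function.update a N t) '' V N (m - t) := by
      ext a
      simp only [Set.mem_iUnion, Set.mem_image, Finset.coe_range, Set.mem_Iio]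
      constructor
      · rintro ⟨hz, hs⟩
        refine ⟨a N, ?_, Function.update a N 0, ⟨?_, ?_⟩, ?_⟩
        · have : a N ≤ m := hs ▸ Finset.single_le_sum (f := a)
            (fun _ _ => Nat.zero_le _) (Finset.mem_range.2 (Nat.lt_succ_self N))
          omega
        · intro j hj
          rcases eq_or_ne j N with rfl | hne
          · simp
          · rw [Function.update_of_ne hne]; exact hz j (by omega)
        · rw [Finset.sum_range_succ] at hs
          have : ∀ j ∈ Finset.range N, Function.update a N 0 j = a j := by
            intro j hj
            exact Function.update_of_ne (by simp at hj; omega) _ _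
          rw [Finset.sum_congr rfl this]
          exact Nat.eq_sub_of_add_eq hs
        · funext j
          rcases eq_or_ne j N with rfl | hne
          · simp
          · simp [Function.update_of_ne hne]
      · rintro ⟨t, ht, b, ⟨hz, hs⟩, rfl⟩
        constructor
        · intro j hj
          rw [Function.update_of_ne (by omega)]
          exact hz j (by omega)
        · rw [Finset.sum_range_succ, Function.update_self]
          have : ∀ j ∈ Finset.range N, Function.update b N t j = b j := by
            intro j hj
            exact Function.update_of_ne (by simp at hj; omega) _ _
          rw [Finset.sum_congr rfl this, hs]
          omega
    rw [hdecomp, finsum_mem_biUnion]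
    · have hinner : ∀ t ∈ (Finset.range (m+1) : Set ℕ),
          (∑ᶠ a ∈ (fun a => Function.update a N t) '' V N (m - t),
            ∏ j ∈ Finset.range (N+1), (((n j).choose (a j)) : ℚ))
          = ((n N).choose t : ℚ) * ((∑ j ∈ Finset.range N, n j).choose (m - t) : ℚ) := by
        intro t ht
        rw [finsum_mem_image]
        · have : ∀ a ∈ V N (m - t),
              (∏ j ∈ Finset.range (N+1), (((n j).choose (Function.update a N t j)) : ℚ))
              = ((n N).choose t : ℚ) * ∏ j ∈ Finset.range N, (((n j).choose (a j)) : ℚ) := by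
            intro a ha
            rw [Finset.prod_range_succ, Function.update_self, mul_comm]
            congr 1
            refine Finset.prod_congr rfl fun j hj => ?_
            rw [Function.update_of_ne (by simp at hj; omega)]
          rw [finsum_mem_congr rfl this,
            finsum_mem_eq_finite_toFinset_sum _ (V_finite N (m-t)), ← Finset.mul_sum,
            ← finsum_mem_eq_finite_toFinset_sum _ (V_finite N (m-t)), ih (m-t)]
        · -- injectivity of update on V N (m - t)
          intro a ha b hb hab
          funext j
          rcases eq_or_ne j N with rfl | hne
          · rw [ha.1 j le_rfl, hb.1 j le_rfl]
          · simpa [Function.update_of_ne hne] using congrFun hab j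
      rw [finsum_mem_congr rfl hinner, finsum_mem_coe_finset]
      have hns : (∑ j ∈ Finset.range (N+1), n j) = n N + ∑ j ∈ Finset.range N, n j := by
        rw [Finset.sum_range_succ]; ring
      rw [hns, Nat.add_choose_eq, Finset.Nat.sum_antidiagonal_eq_sum_range_succ_mk]
      push_cast
      rfl
    · -- pairwise disjoint
      intro t1 h1 t2 h2 hne
      rw [Function.onFun, Set.disjoint_left]
      rintro a ⟨x, hx, rfl⟩ ⟨y, hy, hxy⟩
      apply hne
      simpa using (congrFun hxy N).symm
    · exact (Finset.range (m+1)).finite_toSet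
    · intro t ht
      exact ((V_finite N (m - t)).image _)

/-- The set of triangular arrays with given row and column sums. -/
def S (L : ℕ) (c : ℕ → ℕ) : Set (ℕ → ℕ → ℕ) :=
  {b | (∀ i j, (L ≤ i ∨ L - i ≤ j) → b i j = 0) ∧
       (∀ i < L, (∑ j ∈ Finset.range (L - i), b i j) = c i) ∧
       (∀ i, 1 ≤ i → i < L → (∑ h ∈ Finset.range i, b h (L - i)) = c i)}

/-- The product of multinomial coefficients of the rows. -/
noncomputable def F (L : ℕ) (c : ℕ → ℕ) (b : ℕ → ℕ → ℕ) : ℚ :=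
  ∏ i ∈ Finset.range L,
    (((c i).factorial : ℚ) / ∏ j ∈ Finset.range (L - i), ((b i j).factorial : ℚ))

lemma S_finite (L : ℕ) (c : ℕ → ℕ) : (S L c).Finite := by
  apply (finite2 L ((Finset.range L).sup c)).subset
  rintro b ⟨hz, hr, -⟩ i j
  refine ⟨?_, fun h => hz i j (Or.inl h), fun h => hz i j (Or.inr (le_trans (Nat.sub_le _ _) h))⟩
  by_cases hi : i < L
  · by_cases hj : j < L - i
    · calc b i j ≤ ∑ j' ∈ Finset.range (L-i), b i j' :=
            Finset.single_le_sum (fun _ _ => Nat.zero_le _) (Finset.mem_range.2 hj)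
        _ = c i := hr i hi
        _ ≤ _ := Finset.le_sup (Finset.mem_range.2 hi)
    · simp [hz i j (Or.inr (le_of_not_gt hj))]
  · simp [hz i j (Or.inl (le_of_not_gt hi))]

/-- The gluing map used in the induction step. -/
def Psi (M c1 : ℕ) (b' : ℕ → ℕ → ℕ) (a : ℕ → ℕ) : ℕ → ℕ → ℕ :=
  fun i j =>
    if i = 0 then (if j < M then a j else if j = M then c1 else 0)
    else if i = 1 then (if j < M then b' 0 j - a j else 0)
    else b' (i-1) j

lemma Psi_zero_lt {M c1 : ℕ} {b' : ℕ → ℕ → ℕ} {a : ℕ → ℕ} {j : ℕ} (h : j < M) :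
    Psi M c1 b' a 0 j = a j := by simp [Psi, h]

lemma Psi_zero_self {M c1 : ℕ} {b' : ℕ → ℕ → ℕ} {a : ℕ → ℕ} :
    Psi M c1 b' a 0 M = c1 := by simp [Psi]

lemma Psi_zero_gt {M c1 : ℕ} {b' : ℕ → ℕ → ℕ} {a : ℕ → ℕ} {j : ℕ} (h : M < j) :
    Psi M c1 b' a 0 j = 0 := by
  have h1 : ¬ j < M := by omega
  have h2 : j ≠ M := by omega
  simp [Psi, h1, h2]

lemma Psi_one_lt {M c1 : ℕ} {b' : ℕ → ℕ → ℕ} {a : ℕ → ℕ} {j : ℕ} (h : j < M) :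
    Psi M c1 b' a 1 j = b' 0 j - a j := by simp [Psi, h]

lemma Psi_one_ge {M c1 : ℕ} {b' : ℕ → ℕ → ℕ} {a : ℕ → ℕ} {j : ℕ} (h : M ≤ j) :
    Psi M c1 b' a 1 j = 0 := by
  have h1 : ¬ j < M := by omega
  simp [Psi, h1]

lemma Psi_ge2 {M c1 : ℕ} {b' : ℕ → ℕ → ℕ} {a : ℕ → ℕ} {i j : ℕ} (h : 2 ≤ i) :
    Psi M c1 b' a i j = b' (i-1) j := by
  have h0 : i ≠ 0 := by omega
  have h1 : i ≠ 1 := by omega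
  simp [Psi, h0, h1]

/-- The set of admissible first rows. -/
def A (M d : ℕ) (b' : ℕ → ℕ → ℕ) : Set (ℕ → ℕ) :=
  {a | (∀ j, M ≤ j → a j = 0) ∧ (∀ j, a j ≤ b' 0 j) ∧ ∑ j ∈ Finset.range M, a j = d}

lemma S_elim {M : ℕ} (hM : 1 ≤ M) {c : ℕ → ℕ} {b' : ℕ → ℕ → ℕ}
    (hb' : b' ∈ S M (fun i => if i = 0 then c 0 else c (i+1))) :
    (∀ i j, (M ≤ i ∨ M - i ≤ j) → b' i j = 0) ∧
    (∑ j ∈ Finset.range M, b' 0 j = c 0) ∧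
    (∀ i, 1 ≤ i → i < M → ∑ j ∈ Finset.range (M - i), b' i j = c (i+1)) ∧
    (∀ i, 1 ≤ i → i < M → ∑ h ∈ Finset.range i, b' h (M - i) = c (i+1)) := by
  obtain ⟨hz', hr', hcol'⟩ := hb'
  refine ⟨hz', ?_, ?_, ?_⟩
  · simpa using hr' 0 hM
  · intro i h1 h2
    have := hr' i h2
    simpa [Nat.one_le_iff_ne_zero.mp h1] using this
  · intro i h1 h2
    have := hcol' i h1 h2
    simpa [Nat.one_le_iff_ne_zero.mp h1] using this

lemma Psi_mem {M : ℕ} (hM : 1 ≤ M) {c : ℕ → ℕ} (hcc : c 1 ≤ c 0)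
    {b' : ℕ → ℕ → ℕ} (hb' : b' ∈ S M (fun i => if i = 0 then c 0 else c (i+1)))
    {a : ℕ → ℕ} (ha : a ∈ A M (c 0 - c 1) b') :
    Psi M (c 1) b' a ∈ S (M+1) c := by
  obtain ⟨hz', hb'0sum, hr', hcol'⟩ := S_elim hM hb'
  obtain ⟨haz, hab, has⟩ := ha
  refine ⟨?_, ?_, ?_⟩
  · intro i j hij
    rcases Nat.lt_or_ge i 1 with hi | hi
    · interval_cases i
      exact Psi_zero_gt (by omega)
    rcases Nat.lt_or_ge i 2 with hi2 | hi2
    · interval_cases i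
      exact Psi_one_ge (by omega)
    · rw [Psi_ge2 hi2]
      exact hz' (i-1) j (by omega)
  · intro i hi
    rcases Nat.lt_or_ge i 1 with h0 | h1
    · interval_cases i
      rw [Nat.sub_zero, Finset.sum_range_succ,
        Finset.sum_congr rfl (fun j hj => Psi_zero_lt (Finset.mem_range.1 hj)), Psi_zero_self]
      omega
    rcases Nat.lt_or_ge i 2 with h2 | h2
    · interval_cases i
      rw [Nat.add_sub_cancel,
        Finset.sum_congr rfl (fun j hj => Psi_one_lt (Finset.mem_range.1 hj))]
      have e2 : ∑ j ∈ Finset.range M, (b' 0 j - a j + a j) = ∑ j ∈ Finset.range M, b' 0 j :=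
        Finset.sum_congr rfl fun j _ => by have := hab j; omega
      rw [Finset.sum_add_distrib] at e2
      omega
    · rw [Finset.sum_congr rfl (fun j _ => Psi_ge2 h2)]
      have e3 : M + 1 - i = M - (i-1) := by omega
      rw [e3]
      have := hr' (i-1) (by omega) (by omega)
      rw [this]
      congr 1
      omega
  · intro i h1i hi
    rcases Nat.lt_or_ge i 2 with h2 | h2
    · interval_cases i
      rw [Finset.sum_range_one, Nat.add_sub_cancel, Psi_zero_self]
    · obtain ⟨t, rfl⟩ : ∃ t, i = t + 2 := ⟨i - 2, by omega⟩
      have hjlt : M + 1 - (t+2) < M := by omega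
      rw [Finset.sum_range_succ', Finset.sum_range_succ']
      rw [Finset.sum_congr rfl (fun h _ => Psi_ge2 (i := h + 1 + 1) (by omega)),
        Psi_one_lt hjlt, Psi_zero_lt hjlt]
      have hcol := hcol' (t+1) (by omega) (by omega)
      have e4 : M - (t+1) = M + 1 - (t+2) := by omega
      rw [Finset.sum_range_succ', e4] at hcol
      have e5 : ∀ h, h + 1 + 1 - 1 = h + 1 := fun h => rfl
      simp only [e5]
      have e6 : c (t + 1 + 1) = c (t + 2) := rfl
      rw [e6] at hcol
      have := hab (M + 1 - (t+2))
      omega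

lemma cover {M : ℕ} (hM : 1 ≤ M) {c : ℕ → ℕ} {b : ℕ → ℕ → ℕ} (hb : b ∈ S (M+1) c) :
    ∃ b' ∈ S M (fun i => if i = 0 then c 0 else c (i+1)),
      ∃ a ∈ A M (c 0 - c 1) b', Psi M (c 1) b' a = b := by
  obtain ⟨hz, hr, hcol⟩ := hb
  have hb0M : b 0 M = c 1 := by
    have := hcol 1 le_rfl (by omega)
    rwa [Nat.add_sub_cancel, Finset.sum_range_one] at this
  have hrow0 : ∑ j ∈ Finset.range M, b 0 j + c 1 = c 0 := by
    have := hr 0 (by omega)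
    rw [Nat.sub_zero, Finset.sum_range_succ, hb0M] at this
    exact this
  have hrow1 : ∑ j ∈ Finset.range M, b 1 j = c 1 := by
    have := hr 1 (by omega)
    rwa [Nat.add_sub_cancel] at this
  set b' : ℕ → ℕ → ℕ :=
    fun i j => if i = 0 then (if j < M then b 0 j + b 1 j else 0) else b (i+1) j with hb'def
  set a : ℕ → ℕ := fun j => if j < M then b 0 j else 0 with hadef
  have hb'0lt : ∀ j, j < M → b' 0 j = b 0 j + b 1 j := fun j hj => by simp [hb'def, hj]
  have hb'0ge : ∀ j, M ≤ j → b' 0 j = 0 := fun j hj => by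
    have : ¬ j < M := by omega
    simp [hb'def, this]
  have hb'pos : ∀ i j, i ≠ 0 → b' i j = b (i+1) j := fun i j hi => by simp [hb'def, hi]
  have halt : ∀ j, j < M → a j = b 0 j := fun j hj => by simp [hadef, hj]
  have hage : ∀ j, M ≤ j → a j = 0 := fun j hj => by
    have : ¬ j < M := by omega
    simp [hadef, this]
  have hasum : ∑ j ∈ Finset.range M, a j = c 0 - c 1 := by
    rw [Finset.sum_congr rfl (fun j hj => halt j (Finset.mem_range.1 hj))]
    exact Nat.eq_sub_of_add_eq hrow0
  have hc'eval0 : (fun i : ℕ => if i = 0 then c 0 else c (i+1)) 0 = c 0 := by norm_num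
  have hc'evalpos : ∀ i : ℕ, i ≠ 0 → (fun i : ℕ => if i = 0 then c 0 else c (i+1)) i = c (i+1) :=
    fun i hi => by simp [hi]
  refine ⟨b', ⟨?_, ?_, ?_⟩, a, ⟨hage, ?_, hasum⟩, ?_⟩
  · -- zero condition for b'
    intro i j hij
    rcases Nat.eq_zero_or_pos i with rfl | hi
    · exact hb'0ge j (by omega)
    · rw [hb'pos i j (by omega)]
      exact hz (i+1) j (by omega)
  · -- rows of b'
    intro i hi
    rcases Nat.eq_zero_or_pos i with rfl | hi1
    · rw [hc'eval0, Nat.sub_zero,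
        Finset.sum_congr rfl (fun j hj => hb'0lt j (Finset.mem_range.1 hj)),
        Finset.sum_add_distrib, hrow1]
      exact hrow0
    · rw [Finset.sum_congr rfl (fun j _ => hb'pos i j (by omega)), hc'evalpos i (by omega)]
      have := hr (i+1) (by omega)
      rw [show M + 1 - (i+1) = M - i by omega] at this
      exact this
  · -- columns of b'
    intro i h1 h2
    obtain ⟨t, rfl⟩ : ∃ t, i = t + 1 := ⟨i - 1, by omega⟩
    have hjlt : M - (t+1) < M := by omega
    rw [Finset.sum_range_succ', hb'0lt _ hjlt,
      Finset.sum_congr rfl (fun h _ => hb'pos (h+1) _ (by omega))]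
    have hcolb := hcol (t+2) (by omega) (by omega)
    rw [show M + 1 - (t+2) = M - (t+1) by omega, Finset.sum_range_succ',
      Finset.sum_range_succ'] at hcolb
    have e5 : ∀ h, h + 1 + 1 = h + 2 := fun h => rfl
    simp only [e5, Nat.zero_add] at hcolb ⊢
    rw [if_neg (Nat.succ_ne_zero t)]
    omega
  · -- a j ≤ b' 0 j
    intro j
    rcases Nat.lt_or_ge j M with hj | hj
    · rw [halt j hj, hb'0lt j hj]; omega
    · rw [hage j hj]; omega
  · -- Psi b' a = b
    funext i j
    rcases Nat.lt_or_ge i 1 with h0 | h1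
    · interval_cases i
      rcases Nat.lt_trichotomy j M with hj | rfl | hj
      · rw [Psi_zero_lt hj, halt j hj]
      · rw [Psi_zero_self, hb0M]
      · rw [Psi_zero_gt hj]
        exact (hz 0 j (by omega)).symm
    rcases Nat.lt_or_ge i 2 with h2 | h2
    · interval_cases i
      rcases Nat.lt_or_ge j M with hj | hj
      · rw [Psi_one_lt hj, hb'0lt j hj, halt j hj]
        have := hz 1 j
        omega
      · rw [Psi_one_ge hj]
        exact (hz 1 j (by omega)).symm
    · rw [Psi_ge2 h2, hb'pos (i-1) j (by omega)]
      congr 1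
      omega

lemma Psi_injOn {M c1 d : ℕ} {b' : ℕ → ℕ → ℕ} :
    Set.InjOn (Psi M c1 b') (A M d b') := by
  intro a1 h1 a2 h2 heq
  funext j
  rcases Nat.lt_or_ge j M with hj | hj
  · have := congrFun (congrFun heq 0) j
    rwa [Psi_zero_lt hj, Psi_zero_lt hj] at this
  · rw [h1.1 j hj, h2.1 j hj]

lemma Psi_disjoint {M : ℕ} (hM : 1 ≤ M) {c : ℕ → ℕ} :
    (S M (fun i => if i = 0 then c 0 else c (i+1))).PairwiseDisjoint
      (fun b' => Psi M (c 1) b' '' A M (c 0 - c 1) b') := by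
  intro b1 h1 b2 h2 hne
  rw [Function.onFun, Set.disjoint_left]
  rintro x ⟨a1, ha1, rfl⟩ ⟨a2, ha2, heq⟩
  apply hne
  have haa : ∀ j, a2 j = a1 j := by
    intro j
    rcases Nat.lt_or_ge j M with hj | hj
    · have := congrFun (congrFun heq 0) j
      rwa [Psi_zero_lt hj, Psi_zero_lt hj] at this
    · rw [ha1.1 j hj, ha2.1 j hj]
  funext i j
  rcases Nat.eq_zero_or_pos i with rfl | hi
  · rcases Nat.lt_or_ge j M with hj | hj
    · have := congrFun (congrFun heq 1) j
      rw [Psi_one_lt hj, Psi_one_lt hj] at this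
      have e1 := ha1.2.1 j
      have e2 := ha2.2.1 j
      have e3 := haa j
      omega
    · rw [(S_elim hM h1).1 0 j (by omega), (S_elim hM h2).1 0 j (by omega)]
  · have := congrFun (congrFun heq (i+1)) j
    rw [Psi_ge2 (by omega), Psi_ge2 (by omega)] at this
    simpa using this.symm

lemma A_finite {M : ℕ} (hM : 1 ≤ M) {c : ℕ → ℕ} {b' : ℕ → ℕ → ℕ}
    (hb' : b' ∈ S M (fun i => if i = 0 then c 0 else c (i+1))) (d : ℕ) :
    (A M d b').Finite := by
  apply (finite1 M (c 0)).subset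
  rintro a ⟨haz, hab, -⟩ j
  refine ⟨?_, haz j⟩
  rcases Nat.lt_or_ge j M with hj | hj
  · calc a j ≤ b' 0 j := hab j
      _ ≤ ∑ j' ∈ Finset.range M, b' 0 j' :=
          Finset.single_le_sum (fun _ _ => Nat.zero_le _) (Finset.mem_range.2 hj)
      _ = c 0 := (S_elim hM hb').2.1
  · rw [haz j hj]
    exact Nat.zero_le _

lemma F_eq {M : ℕ} (hM : 1 ≤ M) {c : ℕ → ℕ}
    {b' : ℕ → ℕ → ℕ} (hb' : b' ∈ S M (fun i => if i = 0 then c 0 else c (i+1)))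
    {a : ℕ → ℕ} (ha : a ∈ A M (c 0 - c 1) b') :
    F (M+1) c (Psi M (c 1) b' a)
      = F M (fun i => if i = 0 then c 0 else c (i+1)) b' *
          ∏ j ∈ Finset.range M, (((b' 0 j).choose (a j) : ℚ)) := by
  obtain ⟨K, rfl⟩ : ∃ K, M = K + 1 := ⟨M - 1, by omega⟩
  obtain ⟨haz, hab, has⟩ := ha
  set f : ℕ → ℚ := fun i =>
    ((c i).factorial : ℚ) /
      ∏ j ∈ Finset.range (K+1+1-i), ((Psi (K+1) (c 1) b' a i j).factorial : ℚ) with hf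
  set g : ℕ → ℚ := fun i =>
    (((if i = 0 then c 0 else c (i+1)) : ℕ).factorial : ℚ) /
      ∏ j ∈ Finset.range (K+1-i), ((b' i j).factorial : ℚ) with hg
  have hF1 : F (K+1+1) c (Psi (K+1) (c 1) b' a)
      = ((∏ i ∈ Finset.range K, f (i+1+1)) * f (0+1)) * f 0 := by
    show (∏ i ∈ Finset.range (K+1+1), f i) = _
    rw [Finset.prod_range_succ' f (K+1), Finset.prod_range_succ' (fun i => f (i+1)) K]
  have hF2 : F (K+1) (fun i => if i = 0 then c 0 else c (i+1)) b'
      = (∏ i ∈ Finset.range K, g (i+1)) * g 0 := by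
    show (∏ i ∈ Finset.range (K+1), g i) = _
    rw [Finset.prod_range_succ' g K]
  have hftail : ∀ i ∈ Finset.range K, f (i+1+1)
      = ((c (i+2)).factorial : ℚ) /
          ∏ j ∈ Finset.range (K-i), ((b' (i+1) j).factorial : ℚ) := by
    intro i _
    simp only [hf]
    rw [show K+1+1-(i+1+1) = K-i from by omega]
    have hden : (∏ j ∈ Finset.range (K-i), ((Psi (K+1) (c 1) b' a (i+1+1) j).factorial : ℚ))
        = ∏ j ∈ Finset.range (K-i), ((b' (i+1) j).factorial : ℚ) :=
      Finset.prod_congr rfl fun j _ => by rw [Psi_ge2 (by omega)]; norm_num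
    rw [hden, show i+1+1 = i+2 from rfl]
  have hf1 : f (0+1) = ((c 1).factorial : ℚ) /
      ∏ j ∈ Finset.range (K+1), (((b' 0 j - a j).factorial : ℚ)) := by
    simp only [hf]
    rw [show (0:ℕ)+1 = 1 from rfl, show K+1+1-1 = K+1 from by omega]
    have hden : (∏ j ∈ Finset.range (K+1), ((Psi (K+1) (c 1) b' a 1 j).factorial : ℚ))
        = ∏ j ∈ Finset.range (K+1), (((b' 0 j - a j).factorial : ℚ)) :=
      Finset.prod_congr rfl fun j hj => by rw [Psi_one_lt (Finset.mem_range.1 hj)]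
    rw [hden]
  have hf0 : f 0 = ((c 0).factorial : ℚ) /
      ((∏ j ∈ Finset.range (K+1), ((a j).factorial : ℚ)) * ((c 1).factorial : ℚ)) := by
    simp only [hf]
    rw [show K+1+1-0 = K+1+1 from rfl]
    have hden : (∏ j ∈ Finset.range (K+1+1), ((Psi (K+1) (c 1) b' a 0 j).factorial : ℚ))
        = (∏ j ∈ Finset.range (K+1), ((a j).factorial : ℚ)) * ((c 1).factorial : ℚ) := by
      rw [Finset.prod_range_succ, Psi_zero_self,
        Finset.prod_congr rfl (fun j hj => by rw [Psi_zero_lt (Finset.mem_range.1 hj)])]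
    rw [hden]
  have hg0 : g 0 = ((c 0).factorial : ℚ) /
      ∏ j ∈ Finset.range (K+1), ((b' 0 j).factorial : ℚ) := by
    simp only [hg]
    norm_num
  have hgtail : ∀ i ∈ Finset.range K, g (i+1)
      = ((c (i+2)).factorial : ℚ) /
          ∏ j ∈ Finset.range (K-i), ((b' (i+1) j).factorial : ℚ) := by
    intro i _
    simp only [hg]
    rw [show K+1-(i+1) = K-i from by omega]
    norm_num
  rw [hF1, hF2, hf1, hf0, hg0, Finset.prod_congr rfl hftail, Finset.prod_congr rfl hgtail]
  have hE : (∏ j ∈ Finset.range (K+1), (((b' 0 j).choose (a j) : ℚ)))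
      = (∏ j ∈ Finset.range (K+1), ((b' 0 j).factorial : ℚ)) /
          ((∏ j ∈ Finset.range (K+1), ((a j).factorial : ℚ)) *
           (∏ j ∈ Finset.range (K+1), (((b' 0 j - a j).factorial : ℚ)))) := by
    rw [← Finset.prod_mul_distrib, ← Finset.prod_div_distrib]
    exact Finset.prod_congr rfl fun j _ => Nat.cast_choose ℚ (hab j)
  rw [hE]
  have hne : ∀ (gg : ℕ → ℕ), (∏ j ∈ Finset.range (K+1), ((gg j).factorial : ℚ)) ≠ 0 := by
    intro gg
    apply Finset.prod_ne_zero_iff.2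
    intro j _
    exact_mod_cast Nat.factorial_ne_zero _
  have h1 := hne (fun j => b' 0 j)
  have h2 := hne a
  have h3 := hne (fun j => b' 0 j - a j)
  have h4 : ((c 1).factorial : ℚ) ≠ 0 := by exact_mod_cast Nat.factorial_ne_zero _
  field_simp

lemma key : ∀ L : ℕ, 1 ≤ L → ∀ c : ℕ → ℕ,
    (∑ᶠ b ∈ S L c, F L c b) = ∏ i ∈ Finset.Ico 1 L, (((c 0).choose (c i)) : ℚ) := by
  intro L
  induction L with
  | zero => intro h; exact absurd h (by omega)
  | succ M ih =>
    intro _ c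
    rcases Nat.eq_zero_or_pos M with rfl | hM
    · -- base case L = 1
      have hS : S 1 c = {fun i j => if i = 0 ∧ j = 0 then c 0 else 0} := by
        ext b
        simp only [S, Set.mem_setOf_eq, Set.mem_singleton_iff]
        constructor
        · rintro ⟨hz, hr, -⟩
          funext i j
          by_cases h : i = 0 ∧ j = 0
          · obtain ⟨rfl, rfl⟩ := h
            have := hr 0 (by omega)
            rw [Nat.sub_zero, Finset.sum_range_one] at this
            rw [this, if_pos ⟨rfl, rfl⟩]
          · rw [if_neg h]
            exact hz i j (by omega)
        · rintro rfl
          refine ⟨?_, ?_, ?_⟩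
          · intro i j hij
            show (if i = 0 ∧ j = 0 then c 0 else 0) = 0
            rw [if_neg (by omega)]
          · intro i hi
            interval_cases i
            show (∑ j ∈ Finset.range (1-0), if (0:ℕ) = 0 ∧ j = 0 then c 0 else 0) = c 0
            rw [Nat.sub_zero, Finset.sum_range_one, if_pos ⟨rfl, rfl⟩]
          · intro i h1 h2
            omega
      rw [hS, finsum_mem_singleton, Finset.Ico_self, Finset.prod_empty]
      unfold F
      rw [Finset.prod_range_one, Nat.sub_zero, Finset.prod_range_one]
      show ((c 0).factorial : ℚ) / ((if (0:ℕ) = 0 ∧ (0:ℕ) = 0 then c 0 else 0).factorial : ℚ) = 1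
      rw [if_pos ⟨rfl, rfl⟩]
      exact div_self (by exact_mod_cast Nat.factorial_ne_zero _)
    · -- inductive step, M ≥ 1
      rcases Nat.lt_or_ge (c 0) (c 1) with hlt | hcc
      · have hS : S (M+1) c = ∅ := by
          rw [Set.eq_empty_iff_forall_notMem]
          rintro b ⟨hz, hr, hcol⟩
          have h1 : b 0 M = c 1 := by
            have := hcol 1 le_rfl (by omega)
            rwa [Nat.add_sub_cancel, Finset.sum_range_one] at this
          have h2 : ∑ j ∈ Finset.range (M+1), b 0 j = c 0 := by
            simpa using hr 0 (by omega)
          have h3 : b 0 M ≤ ∑ j ∈ Finset.range (M+1), b 0 j :=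
            Finset.single_le_sum (fun _ _ => Nat.zero_le _) (Finset.mem_range.2 (by omega))
          omega
        rw [hS, finsum_mem_empty]
        symm
        apply Finset.prod_eq_zero (Finset.mem_Ico.2 ⟨le_rfl, by omega⟩)
        rw [Nat.choose_eq_zero_of_lt hlt, Nat.cast_zero]
      · have hSeq : S (M+1) c = ⋃ b' ∈ S M (fun i => if i = 0 then c 0 else c (i+1)),
            Psi M (c 1) b' '' A M (c 0 - c 1) b' := by
          ext b
          simp only [Set.mem_iUnion, Set.mem_image]
          constructor
          · intro hb
            obtain ⟨b', hb', a, ha, heq⟩ := cover hM hb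
            exact ⟨b', hb', a, ha, heq⟩
          · rintro ⟨b', hb', a, ha, rfl⟩
            exact Psi_mem hM hcc hb' ha
        rw [hSeq, finsum_mem_biUnion (Psi_disjoint hM) (S_finite _ _)
          (fun b' hb' => ((A_finite hM hb' _).image _))]
        have hinner : ∀ b' ∈ S M (fun i => if i = 0 then c 0 else c (i+1)),
            (∑ᶠ b ∈ Psi M (c 1) b' '' A M (c 0 - c 1) b', F (M+1) c b)
              = F M (fun i => if i = 0 then c 0 else c (i+1)) b' * ((c 0).choose (c 1) : ℚ) := by
          intro b' hb'
          rw [finsum_mem_image (Psi_injOn), finsum_mem_congr rfl (fun a ha => F_eq hM hb' ha)]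
          rw [finsum_mem_eq_finite_toFinset_sum _ (A_finite hM hb' _), ← Finset.mul_sum,
              ← finsum_mem_eq_finite_toFinset_sum _ (A_finite hM hb' _)]
          congr 1
          have hAV : (∑ᶠ a ∈ A M (c 0 - c 1) b',
                ∏ j ∈ Finset.range M, (((b' 0 j).choose (a j)) : ℚ))
              = ∑ᶠ a ∈ V M (c 0 - c 1),
                ∏ j ∈ Finset.range M, (((b' 0 j).choose (a j)) : ℚ) := by
            rw [finsum_mem_eq_finite_toFinset_sum _ (A_finite hM hb' _),
                finsum_mem_eq_finite_toFinset_sum _ (V_finite M (c 0 - c 1))]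
            apply Finset.sum_subset
            · intro a haA
              simp only [Set.Finite.mem_toFinset] at *
              exact ⟨haA.1, haA.2.2⟩
            · intro a haV haA
              simp only [Set.Finite.mem_toFinset] at haV haA
              have hex : ∃ j, ¬ (a j ≤ b' 0 j) := by
                by_contra hcon
                push_neg at hcon
                exact haA ⟨haV.1, fun j => hcon j, haV.2⟩
              obtain ⟨j, hj⟩ := hex
              have hjM : j < M := by
                by_contra hk
                rw [haV.1 j (by omega)] at hj
                omega
              apply Finset.prod_eq_zero (Finset.mem_range.2 hjM)
              rw [Nat.choose_eq_zero_of_lt (by omega), Nat.cast_zero]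
          rw [hAV, vandermonde, (S_elim hM hb').2.1, Nat.choose_symm hcc]
        rw [finsum_mem_congr rfl hinner,
            finsum_mem_eq_finite_toFinset_sum _ (S_finite M _), ← Finset.sum_mul,
            ← finsum_mem_eq_finite_toFinset_sum _ (S_finite M _), ih (by omega) _]
        have h1 : ∀ i ∈ Finset.Ico 1 M,
            ((((fun i => if i = 0 then c 0 else c (i+1)) 0).choose
              ((fun i => if i = 0 then c 0 else c (i+1)) i) : ℚ))
              = (((c 0).choose (c (i+1))) : ℚ) := by
          intro i hi
          have : i ≠ 0 := by simp only [Finset.mem_Ico] at hi; omega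
          norm_num [this]
        rw [Finset.prod_congr rfl h1]
        have h2 : (∏ i ∈ Finset.Ico 1 M, (((c 0).choose (c (i+1))) : ℚ))
            = ∏ i ∈ Finset.Ico 2 (M+1), (((c 0).choose (c i)) : ℚ) := by
          rw [Finset.prod_Ico_eq_prod_range, Finset.prod_Ico_eq_prod_range]
          refine Finset.prod_congr rfl fun i _ => ?_
          rw [show 1 + i + 1 = 2 + i from by omega]
        have h3 : (∏ i ∈ Finset.Ico 1 (M+1), (((c 0).choose (c i)) : ℚ))
            = (((c 0).choose (c 1)) : ℚ) * ∏ i ∈ Finset.Ico 2 (M+1), (((c 0).choose (c i)) : ℚ) := by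
          rw [← Finset.prod_Ico_consecutive _ (show (1:ℕ) ≤ 2 from by omega)
            (show (2:ℕ) ≤ M+1 from by omega)]
          congr 1
          rw [show Finset.Ico 1 2 = {1} from by decide, Finset.prod_singleton]
        rw [h2, h3, mul_comm]


/-- **Multinomial summation lemma over triangular arrays.**

Arrays are encoded (0-based) as functions `b : ℕ → ℕ → ℕ` supported on the
triangle `{(i,j) : i < ℓ, j < ℓ − i}`; row `i` corresponds to the 1-based row
`i+1` of length `ℓ − i`, and the column constraint for 1-based `2 ≤ i+1 ≤ ℓ`
sums the entries `b h (ℓ − i)` for `h < i`.  The sum over the (finite) set of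
such arrays of the products of multinomial coefficients equals the product of
binomial coefficients `C(k, c̄^i)`. -/
theorem multinomial_summation_triangular (ℓ k : ℕ) (hℓ : 1 ≤ ℓ)
    (c : ℕ → ℕ) (hc : c 0 = k) :
    (∑ᶠ b ∈ {b : ℕ → ℕ → ℕ |
        (∀ i j, (ℓ ≤ i ∨ ℓ - i ≤ j) → b i j = 0) ∧
        (∀ i < ℓ, (∑ j ∈ Finset.range (ℓ - i), b i j) = c i) ∧
        (∀ i, 1 ≤ i → i < ℓ → (∑ h ∈ Finset.range i, b h (ℓ - i)) = c i)},
      ∏ i ∈ Finset.range ℓ,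
        (((c i).factorial : ℚ) /
          ∏ j ∈ Finset.range (ℓ - i), ((b i j).factorial : ℚ)))
    = ∏ i ∈ Finset.range ℓ, ((k.choose (c i) : ℚ)) := by
  subst hc
  have hkey := key ℓ hℓ c
  calc (∑ᶠ b ∈ {b : ℕ → ℕ → ℕ |
        (∀ i j, (ℓ ≤ i ∨ ℓ - i ≤ j) → b i j = 0) ∧
        (∀ i < ℓ, (∑ j ∈ Finset.range (ℓ - i), b i j) = c i) ∧
        (∀ i, 1 ≤ i → i < ℓ → (∑ h ∈ Finset.range i, b h (ℓ - i)) = c i)},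
      ∏ i ∈ Finset.range ℓ,
        (((c i).factorial : ℚ) /
          ∏ j ∈ Finset.range (ℓ - i), ((b i j).factorial : ℚ)))
      = ∑ᶠ b ∈ S ℓ c, F ℓ c b := rfl
    _ = ∏ i ∈ Finset.Ico 1 ℓ, (((c 0).choose (c i)) : ℚ) := hkey
    _ = ∏ i ∈ Finset.range ℓ, (((c 0).choose (c i)) : ℚ) := by
        rw [Finset.range_eq_Ico,
          ← Finset.prod_Ico_consecutive _ (Nat.zero_le 1) hℓ,
          show Finset.Ico 0 1 = {0} from by decide, Finset.prod_singleton,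
          Nat.choose_self, Nat.cast_one, one_mul]

end Cayley18
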